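/- Let A be a well-formed choreography automaton, let p ≠ q be two of its participants, and let A_p and A_q be the intermediate CFSMs of A for p and q. If, for a state s of A, A_p has a run s →ε⋆ s_p →(pq!m) s'_p and A_q has a run s →ε⋆ s_q →(pq?m) s'_q, then the state s has in A an outgoing transition labelled p→q:m. -/

import Mathlib

namespace CAut

/-! ## Basic alphabets: interactions and communication actions -/

/-- An interaction `p→q:m`: participant `p` sends message `m` to `q` (`p ≠ q`). -/
structure Interaction (P M : Type) where
  sender : P
  receiver : P
  ne : sender ≠ receiver
  msg : M

/-- Communication actions: `send p q m` is the output `pq!m` (subject `p`),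
`recv p q m` is the input `pq?m` (subject `q`). -/
inductive Act (P M : Type) : Type where
  | send (p q : P) (m : M)
  | recv (p q : P) (m : M)

/-! ## Labelled transition systems -/

/-- A labelled transition system over labels `L`; the label `none` is the silent label ε.
An FSA is an LTS with finitely many states (expressed with `[Finite Q]` hypotheses). -/
structure LTS (Q L : Type) where
  init : Q
  Trans : Q → Option L → Q → Prop

/-- Runs from a state `q`: lists of consecutive transitions `(source, label, target)`. -/
inductive Steps {Q L : Type} (A : LTS Q L) : Q → List (Q × Option L × Q) → Q → Prop where
  | nil (q : Q) : Steps A q [] q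
  | cons {q q' q'' : Q} {ℓ : Option L} {π : List (Q × Option L × Q)} :
      A.Trans q ℓ q' → Steps A q' π q'' → Steps A q ((q, ℓ, q') :: π) q''

/-- The trace of a run: the concatenation of its non-ε labels. -/
def traceOf {Q L : Type} (π : List (Q × Option L × Q)) : List L :=
  π.filterMap fun t => t.2.1

/-- The language of an LTS: set of traces of its runs (from the initial state). -/
def lang {Q L : Type} (A : LTS Q L) : Set (List L) :=
  {w | ∃ π e, Steps A A.init π e ∧ traceOf π = w}

/-- A state is reachable if some run from the initial state ends in it. -/
def Reachable {Q L : Type} (A : LTS Q L) (q : Q) : Prop :=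
  ∃ π, Steps A A.init π q

/-! ## Participants -/

def ptpI {P M : Type} (α : Interaction P M) : Set P := {α.sender, α.receiver}

/-- Interactions are independent when they share no participant. -/
def Indep {P M : Type} (α β : Interaction P M) : Prop := ptpI α ∩ ptpI β = ∅

def ptpStep {Q P M : Type} (t : Q × Option (Interaction P M) × Q) : Set P :=
  {p | ∃ α, t.2.1 = some α ∧ p ∈ ptpI α}

def ptpRun {Q P M : Type} (π : List (Q × Option (Interaction P M) × Q)) : Set P :=
  {p | ∃ t ∈ π, p ∈ ptpStep t}

/-- The (finite) set of participants occurring in a c-automaton. -/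
def ptps {Q P M : Type} (A : LTS Q (Interaction P M)) : Set P :=
  {p | ∃ q α q', A.Trans q (some α) q' ∧ p ∈ ptpI α}

/-! ## Projection -/

/-- Projection of an interaction on a participant. -/
def projLabel {P M : Type} [DecidableEq P] (p : P) (α : Interaction P M) : Option (Act P M) :=
  if α.sender = p then some (Act.send p α.receiver α.msg)
  else if α.receiver = p then some (Act.recv α.sender p α.msg)
  else none

/-- Homomorphic extension of the projection to words of interactions. -/
def projWord {P M : Type} [DecidableEq P] (p : P) (w : List (Interaction P M)) :
    List (Act P M) :=
  w.filterMap (projLabel p)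

/-- The intermediate CFSM `A_p`: each transition label is replaced by its projection. -/
def intermediate {Q P M : Type} [DecidableEq P] (A : LTS Q (Interaction P M)) (p : P) :
    LTS Q (Act P M) where
  init := A.init
  Trans := fun q ℓ q' => ∃ αo : Option (Interaction P M),
    A.Trans q αo q' ∧ ℓ = αo.bind (projLabel p)

/-- ε-steps of an LTS. -/
def EpsStep {Q L : Type} (A : LTS Q L) (q q' : Q) : Prop := A.Trans q none q'

def epsClosure {Q L : Type} (A : LTS Q L) (S : Set Q) : Set Q :=
  {q' | ∃ q ∈ S, Relation.ReflTransGen (EpsStep A) q q'}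

/-- Determinisation (subset construction); minimisation up to language equivalence is
immaterial for the properties considered here. -/
def determinize {Q L : Type} (A : LTS Q L) : LTS (Set Q) L where
  init := epsClosure A {A.init}
  Trans := fun S ℓo S' => ∃ ℓ, ℓo = some ℓ ∧
    S' = epsClosure A {q' | ∃ q ∈ S, A.Trans q (some ℓ) q'} ∧ S'.Nonempty

/-- The projection `A↓p` of a c-automaton on a participant. -/
def projCA {Q P M : Type} [DecidableEq P] (A : LTS Q (Interaction P M)) (p : P) :
    LTS (Set Q) (Act P M) :=
  determinize (intermediate A p)

/-! ## Synchronous semantics of communicating systems -/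

/-- Synchronous semantics of the communicating system `Ms` (one p-local CFSM for each
participant): configurations map each participant to a local state. -/
def sem {P S M : Type} (Ms : P → LTS S (Act P M)) : LTS (P → S) (Interaction P M) where
  init := fun p => (Ms p).init
  Trans := fun s1 ℓo s2 =>
    (∃ α : Interaction P M, ℓo = some α ∧
      (Ms α.sender).Trans (s1 α.sender) (some (Act.send α.sender α.receiver α.msg))
        (s2 α.sender) ∧
      (Ms α.receiver).Trans (s1 α.receiver) (some (Act.recv α.sender α.receiver α.msg))
        (s2 α.receiver) ∧
      ∀ x, x ∉ ptpI α → s1 x = s2 x)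
    ∨ (ℓo = none ∧ ∃ p, (Ms p).Trans (s1 p) none (s2 p) ∧ ∀ x, x ≠ p → s1 x = s2 x)

/-- `⟦A↓⟧`: the synchronous semantics of the projection of `A`. -/
def semProj {Q P M : Type} [DecidableEq P] (A : LTS Q (Interaction P M)) :
    LTS (P → Set Q) (Interaction P M) :=
  sem (fun p => projCA A p)

/-! ## Bisimulations -/

def sumTrans {QA QB L : Type} (A : LTS QA L) (B : LTS QB L) :
    (QA ⊕ QB) → Option L → (QA ⊕ QB) → Prop
  | Sum.inl q, ℓ, Sum.inl q' => A.Trans q ℓ q'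
  | Sum.inr q, ℓ, Sum.inr q' => B.Trans q ℓ q'
  | _, _, _ => False

/-- A (strong) bisimulation between `A` and `B`. -/
def IsBisimulation {QA QB L : Type} (A : LTS QA L) (B : LTS QB L)
    (R : (QA ⊕ QB) → (QA ⊕ QB) → Prop) : Prop :=
  Symmetric R ∧ R (Sum.inl A.init) (Sum.inr B.init) ∧
  ∀ x y, R x y → ∀ ℓ x', sumTrans A B x ℓ x' →
    ∃ y', sumTrans A B y ℓ y' ∧ R x' y'

def Bisimilar {QA QB L : Type} (A : LTS QA L) (B : LTS QB L) : Prop :=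
  ∃ R, IsBisimulation A B R

/-! ## Well-sequencedness -/

/-- Well-sequencedness of a c-automaton. -/
def WellSequenced {Q P M : Type} (A : LTS Q (Interaction P M)) : Prop :=
  ∀ q q' q'' (α β : Interaction P M),
    A.Trans q (some α) q' → A.Trans q' (some β) q'' →
    (ptpI α ∩ ptpI β).Nonempty ∨
    ∃ q''', A.Trans q (some β) q''' ∧ A.Trans q''' (some α) q'' ∧
      ∀ γ q'''', A.Trans q''' (some γ) q'''' → Indep γ α ∧ Indep γ β

/-! ## Full awareness -/

/-- The partner of `p` in an interaction. -/
def partner {P M : Type} [DecidableEq P] (p : P) (α : Interaction P M) : P :=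
  if α.sender = p then α.receiver else α.sender

/-- Full awareness of a participant of a pair of coinitial runs. -/
inductive FullyAware {Q P M : Type} [DecidableEq P] :
    P → List (Q × Option (Interaction P M) × Q) → List (Q × Option (Interaction P M) × Q) →
    Prop where
  | first {p : P} {π1 π2 : List (Q × Option (Interaction P M) × Q)}
      {α1 α2 : Interaction P M} :
      p ∈ ptpRun π1 → p ∈ ptpRun π2 →
      α1 ≠ α2 → p ∈ ptpI α1 → p ∈ ptpI α2 →
      (traceOf π1).head? = some α1 →
      (traceOf π2).head? = some α2 →
      FullyAware p π1 π2
  | later {p : P} {π1 π2 π₁ π₂ : List (Q × Option (Interaction P M) × Q)}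
      {α1 α2 : Interaction P M} :
      p ∈ ptpRun π1 → p ∈ ptpRun π2 →
      α1 ≠ α2 → p ∈ ptpI α1 → p ∈ ptpI α2 →
      π₁ <+: π1 → π₁ ≠ π1 →
      π₂ <+: π2 → π₂ ≠ π2 →
      projWord p (traceOf π₁) = projWord p (traceOf π₂) →
      FullyAware (partner p α1) π₁ π₂ →
      FullyAware (partner p α2) π₁ π₂ →
      traceOf π₁ ++ [α1] <+: traceOf π1 →
      traceOf π₂ ++ [α2] <+: traceOf π2 →
      α1 ∉ traceOf π2 → α2 ∉ traceOf π1 →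
      FullyAware p π1 π2

/-! ## Branches and spans -/

/-- A nonempty chain of transitions whose first source equals its last target. -/
def IsCycle {Q L : Type} (c : List (Q × Option L × Q)) : Prop :=
  c ≠ [] ∧ (c.head?.map fun t => t.1) = (c.getLast?.map fun t => t.2.2)

/-- Pre-candidate `q`-branch: a run from `q` in which each cycle occurs at most once. -/
def PreCandidate {Q L : Type} (A : LTS Q L) (q : Q) (π : List (Q × Option L × Q)) : Prop :=
  (∃ e, Steps A q π e) ∧
  ∀ c a b a' b', IsCycle c → π = a ++ c ++ b → π = a' ++ c ++ b' → a = a'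

/-- Candidate `q`-branch: a maximal pre-candidate `q`-branch in the prefix order. -/
def Candidate {Q L : Type} (A : LTS Q L) (q : Q) (π : List (Q × Option L × Q)) : Prop :=
  PreCandidate A q π ∧ ∀ π', PreCandidate A q π' → π <+: π' → π' = π

/-- The states visited by a run starting at `q`. -/
def visited {Q L : Type} (q : Q) (π : List (Q × Option L × Q)) : Set Q :=
  insert q {s | ∃ t ∈ π, t.2.2 = s}

/-- `q`-spans. -/
def Span {Q L : Type} (A : LTS Q L) (q : Q) (π1 π2 : List (Q × Option L × Q)) : Prop :=
  PreCandidate A q π1 ∧ PreCandidate A q π2 ∧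
  ((∃ e, Steps A q π1 e ∧ Steps A q π2 e ∧
      ∀ s, s ∈ visited q π1 → s ∈ visited q π2 → s = q ∨ s = e) ∨
   (Candidate A q π1 ∧ Candidate A q π2 ∧
      ∀ s, s ∈ visited q π1 → s ∈ visited q π2 → s = q) ∨
   ((Candidate A q π1 ∧ π2 ≠ [] ∧ Steps A q π2 q ∧
       ∀ s, s ∈ visited q π1 → s ∈ visited q π2 → s = q) ∨
    (Candidate A q π2 ∧ π1 ≠ [] ∧ Steps A q π1 q ∧
       ∀ s, s ∈ visited q π1 → s ∈ visited q π2 → s = q)))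

/-! ## Well-branchedness -/

/-- Determinism: no ε-transitions and no two distinct equally-labelled outgoing transitions. -/
def Deterministic {Q L : Type} (A : LTS Q L) : Prop :=
  (∀ q q', ¬ A.Trans q none q') ∧
  ∀ q ℓ q1 q2, A.Trans q (some ℓ) q1 → A.Trans q (some ℓ) q2 → q1 = q2

/-- The outgoing transitions of a state, as (label, target) pairs. -/
def outT {Q P M : Type} (A : LTS Q (Interaction P M)) (q : Q) :
    Set (Interaction P M × Q) :=
  {t | A.Trans q (some t.1) t.2}

def ptpTs {Q P M : Type} (T : Set (Interaction P M × Q)) : Set P :=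
  {p | ∃ t ∈ T, p ∈ ptpI t.1}

/-- A run starts with a transition from the given set. -/
def startsIn {Q P M : Type} (q : Q) (Ti : Set (Interaction P M × Q))
    (π : List (Q × Option (Interaction P M) × Q)) : Prop :=
  ∃ α q' rest, π = (q, some α, q') :: rest ∧ (α, q') ∈ Ti

/-- The first transition of `π` involving `p` (if any) is with a participant fully aware
of `(π1, π2)`. -/
def FirstWithAware {Q P M : Type} [DecidableEq P] (p : P)
    (π π1 π2 : List (Q × Option (Interaction P M) × Q)) : Prop :=
  ∀ pre t post, π = pre ++ t :: post → p ∈ ptpStep t → p ∉ ptpRun pre →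
    ∃ p', p' ∈ ptpStep t ∧ p' ≠ p ∧ FullyAware p' π1 π2

/-- Well-branchedness of a c-automaton. -/
def WellBranched {Q P M : Type} [DecidableEq P] (A : LTS Q (Interaction P M)) : Prop :=
  Deterministic A ∧
  ∀ q : Q, ∃ T : Set (Set (Interaction P M × Q)),
    (∀ Ti ∈ T, Ti.Nonempty ∧ Ti ⊆ outT A q) ∧
    (∀ t ∈ outT A q, ∃ Ti ∈ T, t ∈ Ti) ∧
    (∀ Ti ∈ T, ∀ Tj ∈ T, Ti ≠ Tj → Ti ∩ Tj = ∅) ∧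
    (∀ Ti ∈ T, ∀ Tj ∈ T, Ti ≠ Tj →
      ptpTs Ti ∩ ptpTs Tj = ∅ ∧
      ∀ αi qi αj qj, (αi, qi) ∈ Ti → (αj, qj) ∈ Tj →
        ∃ q', A.Trans qi (some αj) q' ∧ A.Trans qj (some αi) q') ∧
    (∀ Ti ∈ T,
      (⋂ t ∈ Ti, ptpI t.1).Nonempty ∧
      ∀ p ∈ ptps A, p ∉ (⋂ t ∈ Ti, ptpI t.1) →
        ∀ π1 π2, Span A q π1 π2 → startsIn q Ti π1 → startsIn q Ti π2 →
          projWord p (traceOf π1) ≠ projWord p (traceOf π2) →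
          FullyAware p π1 π2 ∨
          ((p ∉ ptpRun π1 ∧ FirstWithAware p π2 π1 π2 ∧
             ∀ π', Candidate A q (π1 ++ π') → FirstWithAware p π' π1 π2) ∨
           (p ∉ ptpRun π2 ∧ FirstWithAware p π1 π1 π2 ∧
             ∀ π', Candidate A q (π2 ++ π') → FirstWithAware p π' π1 π2)))

/-- Well-formed c-automaton: well-sequenced and well-branched. -/
def WellFormed {Q P M : Type} [DecidableEq P] (A : LTS Q (Interaction P M)) : Prop :=
  WellSequenced A ∧ WellBranched A

/-! ## Deadlock and lock freedom of projections -/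

/-- A state of `A↓p` (a set of states of `A`, by determinisation) is final if it contains
some `q` with a candidate `q`-branch not involving `p`. -/
def FinalState {Q P M : Type} (A : LTS Q (Interaction P M)) (p : P) (S : Set Q) : Prop :=
  ∃ q ∈ S, ∃ π, Candidate A q π ∧ p ∉ ptpRun π

/-- Deadlock freedom of the projection of a c-automaton. -/
def DeadlockFreeProj {Q P M : Type} [DecidableEq P] (A : LTS Q (Interaction P M)) : Prop :=
  ∀ s : P → Set Q, Reachable (semProj A) s →
    (∃ ℓ s', (semProj A).Trans s ℓ s') ∨ ∀ p ∈ ptps A, FinalState A p (s p)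

/-- Lock freedom of the projection of a c-automaton. -/
def LockFreeProj {Q P M : Type} [DecidableEq P] (A : LTS Q (Interaction P M)) : Prop :=
  ∀ s : P → Set Q, Reachable (semProj A) s → ∀ p ∈ ptps A,
    FinalState A p (s p) ∨
    ((∃ ℓ s', (semProj A).Trans s ℓ s') ∧
     ∀ π, Candidate (semProj A) s π → p ∈ ptpRun π)

end CAut

/-!
Turn the two ε-chains into runs `π₁`, `π₂` of `A` from `s`, the first avoiding `p`, the second
avoiding `q`, each followed by a `p→q:m`-step. By induction on the total length we may cut loops,
and a state `z ≠ s` common to both runs (other than a common endpoint) splits the problem into one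
from `z`, which yields `p→q:m` at `z`, and one from `s` with the runs shortened up to `z`.
There remain simple runs meeting only at `s`, or also at a common endpoint, and both
configurations contradict well-branchedness at `s`. Well-sequencedness forces the last step of
`π₁` to involve `q` and the last step of `π₂` to involve `p`. If the runs are cofinal, `q` sees
an interaction along `π₁` but none along `π₂`, and its first interaction after `π₂` is `p→q:m`,
with `p`, who takes no part in `π₁`. Otherwise extend both runs through `p→q:m` to candidate
branches and cut them at their first meeting point. On each resulting `s`-span, `p` or `q`
distinguishes the branches, but its first interaction on the side of `p→q:m` is `p→q:m` itself,
and neither it nor its partner there can be fully aware of the span.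
-/

theorem List.prefix_append_cons_cases {β : Type} {τ l r : List β} {t : β}
    (h : τ <+: l ++ t :: r) : τ <+: l ∨ ∃ w, τ = l ++ t :: w := by
  rcases List.prefix_or_prefix_of_prefix h (List.prefix_append l (t :: r)) with h' | ⟨d, rfl⟩
  · exact .inl h'
  · rw [List.prefix_append_right_inj, List.prefix_cons_iff] at h
    rcases h with rfl | ⟨w, rfl, -⟩
    · exact .inl (by simp)
    · exact .inr ⟨w, rfl⟩

theorem List.Nodup.eq_of_append_cons_eq {α : Type} {a b u v : List α} {x : α}
    (hnd : (a ++ x :: u).Nodup) (h : a ++ x :: u = b ++ x :: v) : a = b := by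
  classical
  have hxa : x ∉ a := fun hx => List.nodup_append.1 hnd |>.2.2 x hx x List.mem_cons_self rfl
  have hxb : x ∉ b := fun hx => List.nodup_append.1 (h ▸ hnd) |>.2.2 x hx x List.mem_cons_self rfl
  have hidx := congrArg (List.idxOf x) h
  simp only [List.idxOf_append_of_notMem hxa, List.idxOf_append_of_notMem hxb,
    List.idxOf_cons_self, add_zero] at hidx
  exact (List.append_inj h hidx).1

namespace CAut

section Runs

variable {Q L : Type} {A : LTS Q L}

theorem Steps.eq_of_nil {s e : Q} (h : Steps A s [] e) : s = e := by
  cases h; rfl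

theorem Steps.append {s y e : Q} {r r' : List (Q × Option L × Q)}
    (h : Steps A s r y) (h' : Steps A y r' e) : Steps A s (r ++ r') e := by
  induction h with
  | nil => exact h'
  | cons ht _ ih => exact .cons ht (ih h')

theorem Steps.of_append {s e : Q} {r r' : List (Q × Option L × Q)}
    (h : Steps A s (r ++ r') e) : ∃ y, Steps A s r y ∧ Steps A y r' e := by
  induction r generalizing s with
  | nil => exact ⟨s, .nil s, h⟩
  | cons t r ih =>
    cases h with
    | cons ht hs =>
      obtain ⟨y, h1, h2⟩ := ih hs
      exact ⟨y, .cons ht h1, h2⟩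

theorem Steps.exists_eq_concat {s e : Q} {r : List (Q × Option L × Q)} (h : Steps A s r e)
    (hr : r ≠ []) : ∃ r' y ℓ, r = r' ++ [(y, ℓ, e)] ∧ A.Trans y ℓ e := by
  obtain ⟨r', ⟨y, ℓ, e'⟩, rfl⟩ := (List.eq_nil_or_concat r).resolve_left hr
  obtain ⟨z, -, hlast⟩ := Steps.of_append (by simpa using h)
  cases hlast with
  | cons ht hs => exact ⟨r', y, ℓ, by rw [hs.eq_of_nil]; simp, hs.eq_of_nil ▸ ht⟩

@[simp] theorem visited_nil (s : Q) : visited s ([] : List (Q × Option L × Q)) = {s} := by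
  simp [visited]

theorem visited_cons (s u c : Q) (ℓ : Option L) (r : List (Q × Option L × Q)) :
    visited s ((u, ℓ, c) :: r) = insert s (visited c r) := by
  ext z
  simp [visited, eq_comm]

theorem visited_mono {s : Q} {r r' : List (Q × Option L × Q)} (h : r ⊆ r') :
    visited s r ⊆ visited s r' := by
  rintro z (rfl | ⟨t, ht, rfl⟩)
  exacts [Or.inl rfl, Or.inr ⟨t, h ht, rfl⟩]

theorem Steps.mem_visited {s e : Q} {r : List (Q × Option L × Q)} (h : Steps A s r e) :
    e ∈ visited s r := by
  induction h with
  | nil => exact Or.inl rfl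
  | cons _ _ ih => rw [visited_cons]; exact Or.inr ih

theorem Steps.exists_split {s e y : Q} {r : List (Q × Option L × Q)} (h : Steps A s r e)
    (hy : y ∈ visited s r) :
    ∃ r₁ r₂, r = r₁ ++ r₂ ∧ Steps A s r₁ y ∧ Steps A y r₂ e := by
  induction h with
  | nil =>
    rw [visited_nil, Set.mem_singleton_iff] at hy
    exact ⟨[], [], rfl, hy ▸ .nil _, hy ▸ .nil _⟩
  | @cons s c e ℓ r ht hs ih =>
    rw [visited_cons] at hy
    rcases hy with rfl | hy
    · exact ⟨[], _, rfl, .nil _, .cons ht hs⟩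
    · obtain ⟨r₁, r₂, rfl, h₁, h₂⟩ := ih hy
      exact ⟨(s, ℓ, c) :: r₁, r₂, rfl, .cons ht h₁, h₂⟩

def runStates (s : Q) (r : List (Q × Option L × Q)) : List Q :=
  s :: r.map fun t => t.2.2

theorem mem_runStates {s y : Q} {r : List (Q × Option L × Q)} :
    y ∈ runStates s r ↔ y ∈ visited s r := by
  simp [runStates, visited, eq_comm]

theorem Steps.exists_loop {s e : Q} {r : List (Q × Option L × Q)} (h : Steps A s r e)
    (hr : ¬ (runStates s r).Nodup) :
    ∃ a c b y, r = a ++ c ++ b ∧ c ≠ [] ∧ Steps A s a y ∧ Steps A y c y ∧ Steps A y b e := by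
  induction h with
  | nil => simp [runStates] at hr
  | @cons s c e ℓ r ht hs ih =>
    change ¬ (s :: runStates c r).Nodup at hr
    rw [List.nodup_cons, not_and_or, not_not] at hr
    rcases hr with hmem | hnd
    · obtain ⟨r₁, r₂, rfl, h₁, h₂⟩ := hs.exists_split (mem_runStates.1 hmem)
      exact ⟨[], (s, ℓ, c) :: r₁, r₂, s, rfl, List.cons_ne_nil _ _, .nil s, .cons ht h₁, h₂⟩
    · obtain ⟨a, c', b, y, rfl, hc, ha, hc', hb⟩ := ih hnd
      exact ⟨(s, ℓ, c) :: a, c', b, y, rfl, hc, .cons ht ha, hc', hb⟩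

theorem Steps.exists_simple_sublist {s e : Q} {r : List (Q × Option L × Q)}
    (h : Steps A s r e) : ∃ r', r'.Sublist r ∧ Steps A s r' e ∧ (runStates s r').Nodup := by
  induction hn : r.length using Nat.strong_induction_on generalizing r with
  | _ n ih =>
    by_cases hr : (runStates s r).Nodup
    · exact ⟨r, .refl r, h, hr⟩
    obtain ⟨a, c, b, y, rfl, hc, ha, -, hb⟩ := h.exists_loop hr
    have hlen : (a ++ b).length < n := by
      have := List.length_pos_of_ne_nil hc
      simp only [List.length_append] at hn ⊢
      omega
    obtain ⟨r', hsub, h', hnd⟩ := ih _ hlen (ha.append hb) rfl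
    refine ⟨r', hsub.trans ?_, h', hnd⟩
    simp

theorem Steps.exists_prefix_first {s e : Q} {r : List (Q × Option L × Q)} (h : Steps A s r e)
    (P : Q → Prop) (hP : ∃ z ∈ visited s r, P z) :
    ∃ τ y, τ <+: r ∧ Steps A s τ y ∧ P y ∧ ∀ z ∈ visited s τ, P z → z = y := by
  induction h with
  | nil =>
    obtain ⟨z, hz', hz⟩ := hP
    rw [visited_nil, Set.mem_singleton_iff] at hz'
    subst hz'
    exact ⟨[], z, List.prefix_refl _, .nil z, hz, fun z' hz' _ => by simpa using hz'⟩
  | @cons s c e ℓ r ht hs ih =>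
    by_cases hs' : P s
    · exact ⟨[], s, List.nil_prefix, .nil s, hs', fun z hz _ => by simpa using hz⟩
    obtain ⟨z, hz, hPz⟩ := hP
    rw [visited_cons] at hz
    obtain ⟨τ, y, hτ, hτs, hy, hfirst⟩ :=
      ih ⟨z, hz.resolve_left (fun hzs => hs' (hzs ▸ hPz)), hPz⟩
    refine ⟨(s, ℓ, c) :: τ, y, List.cons_prefix_cons.2 ⟨rfl, hτ⟩, .cons ht hτs, hy,
      fun z hz hPz => ?_⟩
    rw [visited_cons] at hz
    exact hfirst z (hz.resolve_left fun hzs => hs' (hzs ▸ hPz)) hPz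

end Runs

section Candidates

variable {Q L : Type} {A : LTS Q L}

theorem Steps.isCycle {y : Q} {c : List (Q × Option L × Q)} (h : Steps A y c y) (hc : c ≠ []) :
    IsCycle c := by
  refine ⟨hc, ?_⟩
  obtain ⟨c', z, ℓ, hc', -⟩ := h.exists_eq_concat hc
  conv_rhs => rw [hc', List.getLast?_concat]
  cases h with
  | nil => exact absurd rfl hc
  | cons _ _ => rfl

theorem preCandidate_of_nodup {s e : Q} {r : List (Q × Option L × Q)} (h : Steps A s r e)
    (hnd : r.Nodup) : PreCandidate A s r := by
  refine ⟨⟨e, h⟩, fun c a b a' b' hc h₁ h₂ => ?_⟩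
  obtain ⟨t, c', rfl⟩ := List.exists_cons_of_ne_nil hc.1
  simp only [List.append_assoc, List.cons_append] at h₁ h₂
  exact List.Nodup.eq_of_append_cons_eq (h₁ ▸ hnd) (h₁.symm.trans h₂)

theorem Steps.map_fst_concat {s e e' : Q} {ℓ : Option L} {r : List (Q × Option L × Q)}
    (h : Steps A s r e) : (r ++ [(e, ℓ, e')]).map Prod.fst = runStates s r := by
  induction h with
  | nil => rfl
  | cons _ _ ih => simp only [runStates] at ih ⊢; simp [ih]

theorem preCandidate_concat {s e e' : Q} {ℓ : Option L} {r : List (Q × Option L × Q)}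
    (h : Steps A s r e) (hnd : (runStates s r).Nodup) (ht : A.Trans e ℓ e') :
    PreCandidate A s (r ++ [(e, ℓ, e')]) :=
  preCandidate_of_nodup (h.append (.cons ht (.nil e')))
    (List.Nodup.of_map Prod.fst (h.map_fst_concat ▸ hnd))

theorem PreCandidate.of_prefix {s : Q} {r r' : List (Q × Option L × Q)}
    (h : PreCandidate A s r) (hp : r' <+: r) : PreCandidate A s r' := by
  obtain ⟨⟨e, hs⟩, hcyc⟩ := h
  obtain ⟨z, rfl⟩ := hp
  obtain ⟨y, hy, -⟩ := hs.of_append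
  refine ⟨⟨y, hy⟩, fun c a b a' b' hc h₁ h₂ => hcyc c a (b ++ z) a' (b' ++ z) hc ?_ ?_⟩
  · simp [h₁]
  · simp [h₂]

theorem PreCandidate.exists_of_append {s : Q} {r r' : List (Q × Option L × Q)}
    (h : PreCandidate A s (r ++ r')) : ∃ y, Steps A s r y ∧ PreCandidate A y r' := by
  obtain ⟨⟨e, hs⟩, hcyc⟩ := h
  obtain ⟨y, hy, hy'⟩ := hs.of_append
  refine ⟨y, hy, ⟨e, hy'⟩, fun c a b a' b' hc h₁ h₂ => ?_⟩
  simpa using hcyc c (r ++ a) b (r ++ a') b' hc (by simp [h₁]) (by simp [h₂])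

def shortCycles (r : List (Q × Option L × Q)) : Set (List (Q × Option L × Q)) :=
  {c | IsCycle c ∧ c.length ≤ Nat.card Q ∧ c <:+: r}

variable [Finite Q] [Finite L]

theorem shortCycles_finite (r : List (Q × Option L × Q)) : (shortCycles r).Finite :=
  (List.finite_length_le _ (Nat.card Q)).subset fun _ hc => hc.2.1

/-- Each block of `Nat.card Q` consecutive steps of a pre-candidate contains a short cycle,
and these cycles are pairwise distinct because no cycle occurs twice. -/
theorem PreCandidate.le_ncard_shortCycles (k : ℕ) {s : Q} {r : List (Q × Option L × Q)}
    (h : PreCandidate A s r) (hk : k * Nat.card Q ≤ r.length) : k ≤ (shortCycles r).ncard := by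
  induction k generalizing s r with
  | zero => exact Nat.zero_le _
  | succ k ih =>
    set N := Nat.card Q
    have hN : N ≤ r.length := le_trans (Nat.le_mul_of_pos_left N k.succ_pos) hk
    have hsplit := List.take_append_drop N r
    obtain ⟨y, hy, hdrop⟩ := (hsplit ▸ h).exists_of_append
    have hlen : (r.take N).length = N := List.length_take_of_le hN
    have hloop : ¬ (runStates s (r.take N)).Nodup := by
      intro hnd
      cases nonempty_fintype Q
      have := hnd.length_le_card
      simp only [runStates, List.length_cons, List.length_map, hlen] at this
      have : N = Fintype.card Q := Nat.card_eq_fintype_card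
      omega
    obtain ⟨a, c, b, z, htake, hc, -, hcz, -⟩ := hy.exists_loop hloop
    have hcr : c ∈ shortCycles r := by
      refine ⟨hcz.isCycle hc, ?_, ?_⟩
      · have := congrArg List.length htake
        simp only [List.length_append, hlen] at this
        omega
      · exact ⟨a, b ++ r.drop N, by rw [← List.append_assoc, ← htake, hsplit]⟩
    have hcdrop : c ∉ shortCycles (r.drop N) := by
      rintro ⟨-, -, u, v, huv⟩
      have heq := h.2 c a (b ++ r.drop N) (r.take N ++ u) v (hcz.isCycle hc)
        (by rw [← List.append_assoc, ← htake, hsplit])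
        (by conv_lhs => rw [← hsplit, ← huv]
            simp)
      have := congrArg List.length heq
      have := congrArg List.length htake
      have := List.length_pos_of_ne_nil hc
      simp only [List.length_append, hlen] at *
      omega
    have hsub : shortCycles (r.drop N) ⊆ shortCycles r := fun c' ⟨h₁, h₂, h₃⟩ =>
      ⟨h₁, h₂, h₃.trans (List.drop_suffix N r).isInfix⟩
    have hlt := Set.ncard_lt_ncard (Set.ssubset_iff_of_subset hsub |>.2 ⟨c, hcr, hcdrop⟩)
      (shortCycles_finite r)
    have := ih hdrop (by rw [List.length_drop]; rw [Nat.succ_mul] at hk; omega)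
    omega

theorem exists_preCandidate_length_le (A : LTS Q L) :
    ∃ B, ∀ s r, PreCandidate A s r → r.length ≤ B := by
  let short : Set (List (Q × Option L × Q)) := {c | c.length ≤ Nat.card Q}
  refine ⟨(short.ncard + 1) * Nat.card Q, fun s r h => ?_⟩
  by_contra! hr
  have h₁ := h.le_ncard_shortCycles _ hr.le
  have h₂ : (shortCycles r).ncard ≤ short.ncard :=
    Set.ncard_le_ncard (fun c hc => hc.2.1) (List.finite_length_le _ (Nat.card Q))
  omega

theorem PreCandidate.exists_candidate_append {s : Q} {σ : List (Q × Option L × Q)}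
    (h : PreCandidate A s σ) : ∃ z, Candidate A s (σ ++ z) := by
  obtain ⟨B, hB⟩ := exists_preCandidate_length_le A
  set S := {ρ | PreCandidate A s ρ ∧ σ <+: ρ}
  have hfin : S.Finite := (List.finite_length_le _ B).subset fun ρ hρ => hB s ρ hρ.1
  obtain ⟨_, ⟨hρ, z, rfl⟩, hmax⟩ :=
    Set.exists_max_image S List.length hfin ⟨σ, h, List.prefix_refl σ⟩
  exact ⟨z, hρ, fun π hπ hpre =>
    (hpre.eq_of_length_le (hmax π ⟨hπ, (List.prefix_append σ z).trans hpre⟩)).symm⟩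

end Candidates

section Interactions

variable {P M : Type}

instance [Finite P] [Finite M] : Finite (Interaction P M) :=
  Finite.of_injective (fun α => (α.sender, α.receiver, α.msg)) fun α β h => by
    cases α; cases β; simp_all

@[simp] theorem mem_ptpI {x : P} {α : Interaction P M} :
    x ∈ ptpI α ↔ x = α.sender ∨ x = α.receiver := Iff.rfl

theorem eq_or_eq_of_mem_ptpI {x y z : P} {α : Interaction P M} (hx : x ∈ ptpI α)
    (hy : y ∈ ptpI α) (hxy : x ≠ y) (hz : z ∈ ptpI α) : z = x ∨ z = y := by
  simp only [mem_ptpI] at hx hy hz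
  grind

theorem partner_eq [DecidableEq P] {x y : P} {α : Interaction P M} (hx : x ∈ ptpI α)
    (hy : y ∈ ptpI α) (hxy : x ≠ y) : partner x α = y := by
  simp only [mem_ptpI] at hx hy
  unfold partner
  split_ifs <;> grind

variable [DecidableEq P]

theorem projLabel_eq_none_iff {x : P} {β : Interaction P M} :
    projLabel x β = none ↔ x ∉ ptpI β := by
  unfold projLabel
  split_ifs <;> simp_all [eq_comm]

theorem eq_of_projLabel_eq_some {x : P} {β β' : Interaction P M} {a : Act P M}
    (h : projLabel x β = some a) (h' : projLabel x β' = some a) : β = β' := by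
  obtain ⟨s, r, hsr, m⟩ := β
  obtain ⟨s', r', hsr', m'⟩ := β'
  unfold projLabel at h h'
  split_ifs at h h' <;> cases h <;> cases h' <;> simp_all

theorem exists_projLabel_eq_some {x : P} {β : Interaction P M} (hx : x ∈ ptpI β) :
    ∃ a, projLabel x β = some a :=
  Option.ne_none_iff_exists'.1 (mt projLabel_eq_none_iff.1 (not_not.2 hx))

theorem projWord_append (x : P) (w w' : List (Interaction P M)) :
    projWord x (w ++ w') = projWord x w ++ projWord x w' :=
  List.filterMap_append

theorem projLabel_mem_projWord_iff {x : P} {α : Interaction P M} {a : Act P M}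
    (ha : projLabel x α = some a) {w : List (Interaction P M)} :
    a ∈ projWord x w ↔ α ∈ w := by
  simp only [projWord, List.mem_filterMap]
  exact ⟨fun ⟨β, hβ, h⟩ => eq_of_projLabel_eq_some h ha ▸ hβ, fun hα => ⟨α, hα, ha⟩⟩

theorem projWord_ne_nil {x : P} {β : Interaction P M} {w : List (Interaction P M)}
    (hβ : β ∈ w) (hx : x ∈ ptpI β) : projWord x w ≠ [] := by
  obtain ⟨a, ha⟩ := exists_projLabel_eq_some hx
  exact List.ne_nil_of_mem ((projLabel_mem_projWord_iff ha).2 hβ)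

end Interactions

section Traces

variable {Q P M : Type}

@[simp] theorem traceOf_cons_some (u u' : Q) (β : Interaction P M) (r) :
    traceOf ((u, some β, u') :: r) = β :: traceOf r := rfl

@[simp] theorem traceOf_append (r r' : List (Q × Option (Interaction P M) × Q)) :
    traceOf (r ++ r') = traceOf r ++ traceOf r' :=
  List.filterMap_append

theorem mem_ptpRun_iff {x : P} {r : List (Q × Option (Interaction P M) × Q)} :
    x ∈ ptpRun r ↔ ∃ β ∈ traceOf r, x ∈ ptpI β := by
  simp only [ptpRun, ptpStep, traceOf, List.mem_filterMap]
  grind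

theorem mem_ptpRun_append_cons {x : P} {α : Interaction P M} (hx : x ∈ ptpI α) (u u' : Q)
    (r w : List (Q × Option (Interaction P M) × Q)) : x ∈ ptpRun (r ++ (u, some α, u') :: w) :=
  mem_ptpRun_iff.2 ⟨α, by simp, hx⟩

/-- The ε-runs of the intermediate CFSM `A_x`, seen as runs of `A` (which, being deterministic,
has no ε-transitions). -/
def Avoids (x : P) (r : List (Q × Option (Interaction P M) × Q)) : Prop :=
  ∀ t ∈ r, ∃ β, t.2.1 = some β ∧ x ∉ ptpI β

variable {x : P} {r : List (Q × Option (Interaction P M) × Q)}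

theorem Avoids.sublist {r' : List (Q × Option (Interaction P M) × Q)} (h : Avoids x r)
    (hr : r'.Sublist r) : Avoids x r' :=
  fun t ht => h t (hr.subset ht)

theorem Avoids.notMem_ptpRun (h : Avoids x r) : x ∉ ptpRun r := by
  rintro ⟨t, ht, β, hβ, hx⟩
  obtain ⟨β', hβ', hx'⟩ := h t ht
  exact hx' (Option.some_injective _ (hβ'.symm.trans hβ) ▸ hx)

theorem Avoids.notMem_traceOf (h : Avoids x r) {α : Interaction P M} (hx : x ∈ ptpI α) :
    α ∉ traceOf r :=
  fun hα => h.notMem_ptpRun (mem_ptpRun_iff.2 ⟨α, hα, hx⟩)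

theorem Avoids.projWord_eq_nil [DecidableEq P] (h : Avoids x r) :
    projWord x (traceOf r) = [] :=
  List.filterMap_eq_nil_iff.2 fun _ hβ =>
    projLabel_eq_none_iff.2 fun hx => h.notMem_traceOf hx hβ

theorem Avoids.head?_traceOf_append_ne (h : Avoids x r) (hr : r ≠ [])
    (r' : List (Q × Option (Interaction P M) × Q)) {β : Interaction P M} (hx : x ∈ ptpI β) :
    (traceOf (r ++ r')).head? ≠ some β := by
  obtain ⟨⟨u, ℓ, u'⟩, r, rfl⟩ := List.exists_cons_of_ne_nil hr
  obtain ⟨β', hβ', hx'⟩ := h _ List.mem_cons_self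
  cases hβ'
  simp only [List.cons_append, traceOf_cons_some, List.head?_cons]
  intro hβ
  cases hβ
  exact hx' hx

theorem Avoids.eq_or_eq_append_cons {πA r π : List (Q × Option (Interaction P M) × Q)}
    {β : Interaction P M} (hA : Avoids x πA) {α : Interaction P M} {u u' : Q}
    (hπ : π <+: πA ++ (u, some α, u') :: r)
    (htr : traceOf π ++ [β] <+: traceOf (πA ++ (u, some α, u') :: r)) (hx : x ∈ ptpI β) :
    (π = πA ∧ β = α) ∨ ∃ w, π = πA ++ (u, some α, u') :: w := by
  rcases List.prefix_append_cons_cases hπ with ⟨d, rfl⟩ | h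
  · rw [List.append_assoc, traceOf_append, List.prefix_append_right_inj] at htr
    have hhead : (traceOf (d ++ (u, some α, u') :: r)).head? = some β := by
      obtain ⟨t, ht⟩ := htr
      simp [← ht]
    by_cases hd : d = []
    · subst hd
      simp only [List.nil_append, traceOf_cons_some, List.head?_cons, Option.some.injEq] at hhead
      exact .inl ⟨by simp, hhead.symm⟩
    · exact absurd hhead
        ((hA.sublist (List.sublist_append_right _ _)).head?_traceOf_append_ne hd _ hx)
  · exact .inr h

end Traces

section WellFormedness

variable {Q P M : Type} {A : LTS Q (Interaction P M)}

/-- The square that the second alternative of well-sequencedness provides is impossible: its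
edge `q''' →α q''` would have to be independent of `α`. -/
theorem WellSequenced.ptpI_inter_nonempty (hws : WellSequenced A) {a b c : Q}
    {α β : Interaction P M} (h₁ : A.Trans a (some α) b) (h₂ : A.Trans b (some β) c) :
    (ptpI α ∩ ptpI β).Nonempty := by
  rcases hws a b c α β h₁ h₂ with h | ⟨d, -, hα, hind⟩
  · exact h
  · have hself : ptpI α ∩ ptpI α = ∅ := (hind α c hα).1
    exact absurd hself (Set.nonempty_iff_ne_empty.1 ⟨α.sender, by simp, by simp⟩)

theorem WellSequenced.mem_ptpRun_of_avoids (hws : WellSequenced A) {x y : P}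
    {α : Interaction P M} (hx : x ∈ ptpI α) (hy : y ∈ ptpI α) (hxy : x ≠ y) {s e e' : Q}
    {π : List (Q × Option (Interaction P M) × Q)} (hπ : Steps A s π e) (hne : π ≠ [])
    (hA : Avoids x π) (hα : A.Trans e (some α) e') : y ∈ ptpRun π := by
  obtain ⟨π', z, ℓ, rfl, ht⟩ := hπ.exists_eq_concat hne
  obtain ⟨β, hβ, hxβ⟩ := hA (z, ℓ, e) (by simp)
  obtain rfl : ℓ = some β := hβ
  obtain ⟨w, hwβ, hwα⟩ := hws.ptpI_inter_nonempty ht hα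
  rcases eq_or_eq_of_mem_ptpI hx hy hxy hwα with rfl | rfl
  exacts [absurd hwβ hxβ, ⟨(z, some β, e), by simp, β, rfl, hwβ⟩]

theorem Span.symm {s : Q} {π₁ π₂ : List (Q × Option (Interaction P M) × Q)}
    (h : Span A s π₁ π₂) : Span A s π₂ π₁ := by
  obtain ⟨h₁, h₂, ⟨e, he₁, he₂, hc⟩ | ⟨hc₁, hc₂, hc⟩ | ⟨hc₁, hne, hl, hc⟩ | ⟨hc₂, hne, hl, hc⟩⟩ := h
  · exact ⟨h₂, h₁, .inl ⟨e, he₂, he₁, fun z hz₂ hz₁ => hc z hz₁ hz₂⟩⟩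
  · exact ⟨h₂, h₁, .inr (.inl ⟨hc₂, hc₁, fun z hz₂ hz₁ => hc z hz₁ hz₂⟩)⟩
  · exact ⟨h₂, h₁, .inr (.inr (.inr ⟨hc₁, hne, hl, fun z hz₂ hz₁ => hc z hz₁ hz₂⟩))⟩
  · exact ⟨h₂, h₁, .inr (.inr (.inl ⟨hc₂, hne, hl, fun z hz₂ hz₁ => hc z hz₁ hz₂⟩))⟩

variable [DecidableEq P]

theorem FullyAware.mem_ptpRun_left {x : P} {π₁ π₂ : List (Q × Option (Interaction P M) × Q)}
    (h : FullyAware x π₁ π₂) : x ∈ ptpRun π₁ := by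
  cases h <;> assumption

theorem FullyAware.mem_ptpRun_right {x : P} {π₁ π₂ : List (Q × Option (Interaction P M) × Q)}
    (h : FullyAware x π₁ π₂) : x ∈ ptpRun π₂ := by
  cases h <;> assumption

theorem FirstWithAware.fullyAware_of_eq_append_cons {x y : P} {α : Interaction P M}
    (hx : x ∈ ptpI α) (hy : y ∈ ptpI α) (hxy : x ≠ y)
    {ρ π₁ π₂ pre post : List (Q × Option (Interaction P M) × Q)} {u u' : Q}
    (h : FirstWithAware x ρ π₁ π₂) (hρ : ρ = pre ++ (u, some α, u') :: post)
    (hpre : x ∉ ptpRun pre) : FullyAware y π₁ π₂ := by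
  obtain ⟨z, ⟨β, hβ, hzβ⟩, hzx, haw⟩ := h pre _ post hρ ⟨α, rfl, hx⟩ hpre
  cases hβ
  rcases eq_or_eq_of_mem_ptpI hx hy hxy hzβ with rfl | rfl
  exacts [absurd rfl hzx, haw]

/-- The alternatives offered by condition (ii) of well-branchedness at `q` to a participant
`x` whose projections of a `q`-span `(π₁, π₂)` differ. -/
def AwareOfSpan (A : LTS Q (Interaction P M)) (q : Q) (x : P)
    (π₁ π₂ : List (Q × Option (Interaction P M) × Q)) : Prop :=
  FullyAware x π₁ π₂ ∨
  ((x ∉ ptpRun π₁ ∧ FirstWithAware x π₂ π₁ π₂ ∧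
      ∀ π', Candidate A q (π₁ ++ π') → FirstWithAware x π' π₁ π₂) ∨
   (x ∉ ptpRun π₂ ∧ FirstWithAware x π₁ π₁ π₂ ∧
      ∀ π', Candidate A q (π₂ ++ π') → FirstWithAware x π' π₁ π₂))

/-- Two transitions leaving `s` lie in the same block of the partition, since a diamond
between different blocks would contradict well-sequencedness. -/
theorem WellFormed.awareOfSpan (hwf : WellFormed A) {x : P} (hx : x ∈ ptps A) {s : Q}
    {t : Q × Option (Interaction P M) × Q} {π₁ π₂ : List (Q × Option (Interaction P M) × Q)}
    (hspan : Span A s (t :: π₁) π₂) (hπ₂ : π₂ ≠ []) (hxt : x ∉ ptpStep t)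
    (hproj : projWord x (traceOf (t :: π₁)) ≠ projWord x (traceOf π₂)) :
    AwareOfSpan A s x (t :: π₁) π₂ := by
  obtain ⟨hws, ⟨hnoeps, -⟩, hwb⟩ := hwf
  obtain ⟨⟨_, h₁⟩, -⟩ := hspan.1
  obtain ⟨⟨_, h₂⟩, -⟩ := hspan.2.1
  obtain ⟨t₂, π₂, rfl⟩ := List.exists_cons_of_ne_nil hπ₂
  cases h₁ with | @cons _ c₁ _ ℓ₁ _ ht₁ _ =>
  cases h₂ with | @cons _ c₂ _ ℓ₂ _ ht₂ _ =>
  obtain ⟨γ₁, rfl⟩ := Option.ne_none_iff_exists'.1 fun h : ℓ₁ = none => hnoeps _ _ (h ▸ ht₁)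
  obtain ⟨γ₂, rfl⟩ := Option.ne_none_iff_exists'.1 fun h : ℓ₂ = none => hnoeps _ _ (h ▸ ht₂)
  obtain ⟨T, -, hTcover, -, hTindep, hTaware⟩ := hwb s
  obtain ⟨T₁, hT₁, h₁T⟩ := hTcover (γ₁, c₁) ht₁
  obtain ⟨T₂, hT₂, h₂T⟩ := hTcover (γ₂, c₂) ht₂
  obtain rfl : T₁ = T₂ := by
    by_contra hne
    obtain ⟨hdisj, hsquare⟩ := hTindep T₁ hT₁ T₂ hT₂ hne
    obtain ⟨d, hd, -⟩ := hsquare γ₁ c₁ γ₂ c₂ h₁T h₂T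
    obtain ⟨z, hz₁, hz₂⟩ := hws.ptpI_inter_nonempty ht₁ hd
    exact hdisj.subset ⟨⟨_, h₁T, hz₁⟩, ⟨_, h₂T, hz₂⟩⟩
  exact (hTaware T₁ hT₁).2 x hx (fun hmem => hxt ⟨γ₁, rfl, Set.mem_iInter₂.1 hmem _ h₁T⟩)
    _ _ hspan ⟨γ₁, c₁, π₁, rfl, h₁T⟩ ⟨γ₂, c₂, π₂, rfl, h₂T⟩ hproj

end WellFormedness

section Core

variable {Q P M : Type} [DecidableEq P] {A : LTS Q (Interaction P M)}
  {α : Interaction P M} {x y : P} {u u' : Q}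

theorem Avoids.head?_projWord_append_cons {πA w : List (Q × Option (Interaction P M) × Q)}
    (hA : Avoids x πA) {a : Act P M} (ha : projLabel x α = some a) :
    (projWord x (traceOf (πA ++ (u, some α, u') :: w))).head? = some a := by
  rw [traceOf_append, projWord_append, hA.projWord_eq_nil, List.nil_append, traceOf_cons_some]
  simp [projWord, ha]

theorem Avoids.head?_projWord_ne {πB r π : List (Q × Option (Interaction P M) × Q)}
    (hB : Avoids y πB) (hy : y ∈ ptpI α) (hxB : x ∈ ptpRun πB) {a : Act P M}
    (ha : projLabel x α = some a) (hπ : π <+: πB ++ r) :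
    (projWord x (traceOf π)).head? ≠ some a := by
  intro hhead
  obtain ⟨t, ht⟩ := List.head?_eq_some_iff.1 hhead
  obtain ⟨β, hβ, hxβ⟩ := mem_ptpRun_iff.1 hxB
  obtain ⟨b, bs, hb⟩ := List.exists_cons_of_ne_nil (projWord_ne_nil hβ hxβ)
  have hpre : projWord x (traceOf π) <+: projWord x (traceOf πB ++ traceOf r) := by
    rw [← traceOf_append]
    exact (hπ.filterMap _).filterMap _
  rw [ht, projWord_append, hb, List.cons_append, List.cons_prefix_cons] at hpre
  have hab : a ∈ projWord x (traceOf πB) := hpre.1 ▸ hb ▸ List.mem_cons_self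
  exact hB.notMem_traceOf hy ((projLabel_mem_projWord_iff ha).1 hab)

theorem not_fullyAware_of_avoids_partner (hx : x ∈ ptpI α) (hy : y ∈ ptpI α) (hxy : x ≠ y)
    {πA r τ : List (Q × Option (Interaction P M) × Q)} (hne : πA ≠ []) (hA : Avoids x πA)
    (hτ : Avoids y τ) : ¬ FullyAware x (πA ++ (u, some α, u') :: r) τ := by
  intro h
  cases h with
  | first _ _ _ hx₁ _ hhd _ => exact hA.head?_traceOf_append_ne hne _ hx₁ hhd
  | later _ _ _ hx₁ _ hpre₁ _ hpre₂ _ hproj haw₁ _ htr₁ _ _ _ =>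
    rcases hA.eq_or_eq_append_cons hpre₁ htr₁ hx₁ with ⟨rfl, rfl⟩ | ⟨w, rfl⟩
    · rw [partner_eq hx hy hxy] at haw₁
      exact (hτ.sublist hpre₂.sublist).notMem_ptpRun haw₁.mem_ptpRun_right
    · obtain ⟨a, ha⟩ := exists_projLabel_eq_some hx
      have hα : α ∈ traceOf (πA ++ (u, some α, u') :: w) := by simp
      rw [← projLabel_mem_projWord_iff ha, hproj, projLabel_mem_projWord_iff ha] at hα
      exact (hτ.sublist hpre₂.sublist).notMem_traceOf hy hα

theorem not_fullyAware_of_passes (hx : x ∈ ptpI α) (hy : y ∈ ptpI α)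
    {πA πB r₁ r₂ : List (Q × Option (Interaction P M) × Q)} {v v' : Q} (hne : πA ≠ [])
    (hA : Avoids x πA) (hB : Avoids y πB) (hxB : x ∈ ptpRun πB) :
    ¬ FullyAware x (πA ++ (u, some α, u') :: r₁) (πB ++ (v, some α, v') :: r₂) := by
  intro h
  cases h with
  | first _ _ _ hx₁ _ hhd _ => exact hA.head?_traceOf_append_ne hne _ hx₁ hhd
  | later _ _ _ hx₁ _ hpre₁ _ hpre₂ _ hproj _ _ htr₁ _ hnot₁ _ =>
    rcases hA.eq_or_eq_append_cons hpre₁ htr₁ hx₁ with ⟨-, rfl⟩ | ⟨w, rfl⟩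
    · exact hnot₁ (by simp)
    · obtain ⟨a, ha⟩ := exists_projLabel_eq_some hx
      exact hB.head?_projWord_ne hy hxB ha hpre₂ (hproj ▸ hA.head?_projWord_append_cons ha)

theorem false_of_span_passes_avoids (hwf : WellFormed A) (hx : x ∈ ptpI α) (hy : y ∈ ptpI α)
    (hxy : x ≠ y) (hxA : x ∈ ptps A) {s : Q} {πA w τ : List (Q × Option (Interaction P M) × Q)}
    (hne : πA ≠ []) (hA : Avoids x πA) (hτne : τ ≠ []) (hτ : Avoids y τ)
    (hspan : Span A s (πA ++ (u, some α, u') :: w) τ) : False := by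
  obtain ⟨a, ha⟩ := exists_projLabel_eq_some hx
  obtain ⟨t, πA, rfl⟩ := List.exists_cons_of_ne_nil hne
  have hxt : x ∉ ptpStep t := fun hxt => hA.notMem_ptpRun ⟨t, List.mem_cons_self, hxt⟩
  have hproj : projWord x (traceOf (t :: (πA ++ (u, some α, u') :: w))) ≠
      projWord x (traceOf τ) := by
    intro h
    have hα : α ∈ traceOf ((t :: πA) ++ (u, some α, u') :: w) := by
      rw [traceOf_append]
      simp
    rw [← projLabel_mem_projWord_iff ha, List.cons_append, h, projLabel_mem_projWord_iff ha] at hα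
    exact hτ.notMem_traceOf hy hα
  rcases hwf.awareOfSpan hxA hspan hτne hxt hproj with hfa | ⟨hx₁, -⟩ | ⟨-, hfirst, -⟩
  · exact not_fullyAware_of_avoids_partner hx hy hxy hne hA hτ hfa
  · exact hx₁ (mem_ptpRun_append_cons hx _ _ (t :: πA) w)
  · exact hτ.notMem_ptpRun
      (hfirst.fullyAware_of_eq_append_cons hx hy hxy rfl hA.notMem_ptpRun).mem_ptpRun_right

theorem false_of_span_passes_passes (hwf : WellFormed A) (hx : x ∈ ptpI α) (hy : y ∈ ptpI α)
    (hxA : x ∈ ptps A) {s v v' : Q}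
    {πA πB w₁ w₂ : List (Q × Option (Interaction P M) × Q)} (hne : πA ≠ []) (hA : Avoids x πA)
    (hB : Avoids y πB) (hxB : x ∈ ptpRun πB)
    (hspan : Span A s (πA ++ (u, some α, u') :: w₁) (πB ++ (v, some α, v') :: w₂)) : False := by
  obtain ⟨a, ha⟩ := exists_projLabel_eq_some hx
  obtain ⟨t, πA, rfl⟩ := List.exists_cons_of_ne_nil hne
  have hxt : x ∉ ptpStep t := fun hxt => hA.notMem_ptpRun ⟨t, List.mem_cons_self, hxt⟩
  have hproj : projWord x (traceOf (t :: (πA ++ (u, some α, u') :: w₁))) ≠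
      projWord x (traceOf (πB ++ (v, some α, v') :: w₂)) := fun h =>
    hB.head?_projWord_ne hy hxB ha (List.prefix_refl _)
      (h ▸ hA.head?_projWord_append_cons ha)
  rcases hwf.awareOfSpan hxA hspan (by simp) hxt hproj with hfa | ⟨hx₁, -⟩ | ⟨hx₂, -⟩
  · exact not_fullyAware_of_passes hx hy hne hA hB hxB hfa
  · exact hx₁ (mem_ptpRun_append_cons hx _ _ (t :: πA) w₁)
  · exact hx₂ (mem_ptpRun_append_cons hx _ _ πB w₂)

variable [Finite Q] [Finite P] [Finite M]

theorem false_of_cofinal_runs (hwf : WellFormed A) (hx : x ∈ ptpI α) (hy : y ∈ ptpI α)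
    (hxy : x ≠ y) {s e e' : Q} {π₁ π₂ : List (Q × Option (Interaction P M) × Q)}
    (h₁ : Steps A s π₁ e) (hnd₁ : (runStates s π₁).Nodup) (hne₁ : π₁ ≠ []) (hA₁ : Avoids x π₁)
    (h₂ : Steps A s π₂ e) (hnd₂ : (runStates s π₂).Nodup) (hne₂ : π₂ ≠ []) (hA₂ : Avoids y π₂)
    (hα : A.Trans e (some α) e')
    (hshared : ∀ z ∈ visited s π₁, z ∈ visited s π₂ → z = s ∨ z = e) : False := by
  have hy₁ : y ∈ ptpRun π₁ := hwf.1.mem_ptpRun_of_avoids hx hy hxy h₁ hne₁ hA₁ hα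
  have hspan : Span A s π₂ π₁ :=
    ⟨(preCandidate_concat h₂ hnd₂ hα).of_prefix (List.prefix_append _ _),
      (preCandidate_concat h₁ hnd₁ hα).of_prefix (List.prefix_append _ _),
      .inl ⟨e, h₂, h₁, fun z hz₂ hz₁ => hshared z hz₁ hz₂⟩⟩
  obtain ⟨t, π₂, rfl⟩ := List.exists_cons_of_ne_nil hne₂
  have hyt : y ∉ ptpStep t := fun hyt => hA₂.notMem_ptpRun ⟨t, List.mem_cons_self, hyt⟩
  have hproj : projWord y (traceOf (t :: π₂)) ≠ projWord y (traceOf π₁) := by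
    obtain ⟨β, hβ, hyβ⟩ := mem_ptpRun_iff.1 hy₁
    rw [hA₂.projWord_eq_nil]
    exact (projWord_ne_nil hβ hyβ).symm
  rcases hwf.awareOfSpan ⟨e, α, e', hα, hy⟩ hspan hne₁ hyt hproj with
    hfa | ⟨-, -, hext⟩ | ⟨hnot₁, -⟩
  · exact hA₂.notMem_ptpRun hfa.mem_ptpRun_left
  · obtain ⟨z, hz⟩ := (preCandidate_concat h₂ hnd₂ hα).exists_candidate_append
    rw [List.append_assoc, List.singleton_append] at hz
    have hfa := (hext _ hz).fullyAware_of_eq_append_cons hy hx hxy.symm (pre := []) rfl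
      (by simp [ptpRun])
    exact hA₁.notMem_ptpRun hfa.mem_ptpRun_right
  · exact hnot₁ hy₁

theorem false_of_disjoint_runs (hwf : WellFormed A) (hx : x ∈ ptpI α) (hy : y ∈ ptpI α)
    (hxy : x ≠ y) {s sp sp' sq sq' : Q} {π₁ π₂ : List (Q × Option (Interaction P M) × Q)}
    (h₁ : Steps A s π₁ sp) (hnd₁ : (runStates s π₁).Nodup) (hne₁ : π₁ ≠ []) (hA₁ : Avoids x π₁)
    (hα₁ : A.Trans sp (some α) sp')
    (h₂ : Steps A s π₂ sq) (hnd₂ : (runStates s π₂).Nodup) (hne₂ : π₂ ≠ []) (hA₂ : Avoids y π₂)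
    (hα₂ : A.Trans sq (some α) sq')
    (hshared : ∀ z ∈ visited s π₁, z ∈ visited s π₂ → z = s) : False := by
  have hxA : x ∈ ptps A := ⟨sp, α, sp', hα₁, hx⟩
  have hx₂ : x ∈ ptpRun π₂ := hwf.1.mem_ptpRun_of_avoids hy hx hxy.symm h₂ hne₂ hA₂ hα₂
  obtain ⟨z₁, hz₁⟩ := (preCandidate_concat h₁ hnd₁ hα₁).exists_candidate_append
  obtain ⟨z₂, hz₂⟩ := (preCandidate_concat h₂ hnd₂ hα₂).exists_candidate_append
  rw [List.append_assoc, List.singleton_append] at hz₁ hz₂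
  set ρ₁ := π₁ ++ (sp, some α, sp') :: z₁
  set ρ₂ := π₂ ++ (sq, some α, sq') :: z₂
  by_cases hdisj : ∀ z ∈ visited s ρ₁, z ∈ visited s ρ₂ → z = s
  · exact false_of_span_passes_passes hwf hx hy hxA hne₁ hA₁ hA₂ hx₂
      ⟨hz₁.1, hz₂.1, .inr (.inl ⟨hz₁, hz₂, hdisj⟩)⟩
  -- otherwise cut both candidates at the first state of `ρ₂` other than `s` met by `ρ₁`
  push Not at hdisj
  obtain ⟨⟨_, hρ₁⟩, -⟩ := hz₁.1
  obtain ⟨⟨_, hρ₂⟩, -⟩ := hz₂.1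
  obtain ⟨τ₂, e, hτ₂ρ, hτ₂, ⟨he₁, hes⟩, hfirst⟩ :=
    hρ₂.exists_prefix_first (fun z => z ∈ visited s ρ₁ ∧ z ≠ s)
      (by obtain ⟨z, h, h', hzs⟩ := hdisj; exact ⟨z, h', h, hzs⟩)
  obtain ⟨τ₁, rest, hρ₁eq, hτ₁, -⟩ := hρ₁.exists_split he₁
  have hτ₁ρ : τ₁ <+: ρ₁ := ⟨rest, hρ₁eq.symm⟩
  have hspan : Span A s τ₁ τ₂ :=
    ⟨hz₁.1.of_prefix hτ₁ρ, hz₂.1.of_prefix hτ₂ρ, .inl ⟨e, hτ₁, hτ₂, fun z hz₁ hz₂ =>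
      or_iff_not_imp_left.2 fun hzs => hfirst z hz₂ ⟨visited_mono hτ₁ρ.subset hz₁, hzs⟩⟩⟩
  have hτne : ∀ {τ}, Steps A s τ e → τ ≠ [] := fun h hnil => hes (hnil ▸ h).eq_of_nil.symm
  rcases List.prefix_append_cons_cases hτ₁ρ with hin₁ | ⟨w₁, rfl⟩ <;>
    rcases List.prefix_append_cons_cases hτ₂ρ with hin₂ | ⟨w₂, rfl⟩
  · exact hes (hshared e (visited_mono hin₁.subset hτ₁.mem_visited)
      (visited_mono hin₂.subset hτ₂.mem_visited))
  · exact false_of_span_passes_avoids hwf hy hx hxy.symm ⟨sq, α, sq', hα₂, hy⟩ hne₂ hA₂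
      (hτne hτ₁) (hA₁.sublist hin₁.sublist) hspan.symm
  · exact false_of_span_passes_avoids hwf hx hy hxy hxA hne₁ hA₁ (hτne hτ₂)
      (hA₂.sublist hin₂.sublist) hspan
  · exact false_of_span_passes_passes hwf hx hy hxA hne₁ hA₁ hA₂ hx₂ hspan

theorem exists_trans_of_avoiding_runs (hwf : WellFormed A) (hx : x ∈ ptpI α)
    (hy : y ∈ ptpI α) (hxy : x ≠ y) {s sp sp' sq sq' : Q}
    {π₁ π₂ : List (Q × Option (Interaction P M) × Q)}
    (h₁ : Steps A s π₁ sp) (hA₁ : Avoids x π₁) (hα₁ : A.Trans sp (some α) sp')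
    (h₂ : Steps A s π₂ sq) (hA₂ : Avoids y π₂) (hα₂ : A.Trans sq (some α) sq') :
    ∃ s', A.Trans s (some α) s' := by
  induction hn : π₁.length + π₂.length using Nat.strong_induction_on
    generalizing s sp sp' sq sq' π₁ π₂ with
  | _ n ih =>
  obtain ⟨π₁, hsub₁, h₁, hnd₁⟩ := h₁.exists_simple_sublist
  obtain ⟨π₂, hsub₂, h₂, hnd₂⟩ := h₂.exists_simple_sublist
  replace hA₁ := hA₁.sublist hsub₁
  replace hA₂ := hA₂.sublist hsub₂
  have hlen : π₁.length + π₂.length ≤ n := hn ▸ Nat.add_le_add hsub₁.length_le hsub₂.length_le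
  rcases eq_or_ne π₁ [] with rfl | hne₁
  · exact ⟨sp', h₁.eq_of_nil ▸ hα₁⟩
  rcases eq_or_ne π₂ [] with rfl | hne₂
  · exact ⟨sq', h₂.eq_of_nil ▸ hα₂⟩
  by_cases hshared : ∃ z ∈ visited s π₁, z ∈ visited s π₂ ∧ z ≠ s ∧ ¬ (z = sp ∧ z = sq)
  · -- both runs pass through `z`: first `α` is enabled at `z`, and hence at `s`
    obtain ⟨z, hz₁, hz₂, hzs, hzend⟩ := hshared
    obtain ⟨a₁, b₁, rfl, ha₁, hb₁⟩ := h₁.exists_split hz₁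
    obtain ⟨a₂, b₂, rfl, ha₂, hb₂⟩ := h₂.exists_split hz₂
    have hpos : ∀ {a}, Steps A s a z → 0 < a.length := fun h =>
      List.length_pos_of_ne_nil fun hnil => hzs (hnil ▸ h).eq_of_nil.symm
    have hb : 0 < b₁.length + b₂.length := by
      by_contra! h0
      simp only [Nat.le_zero, Nat.add_eq_zero_iff, List.length_eq_zero_iff] at h0
      obtain ⟨rfl, rfl⟩ := h0
      exact hzend ⟨hb₁.eq_of_nil, hb₂.eq_of_nil⟩
    simp only [List.length_append] at hlen
    obtain ⟨w, hw⟩ := ih _ (by have := hpos ha₁; omega) hb₁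
      (hA₁.sublist (List.sublist_append_right _ _)) hα₁ hb₂
      (hA₂.sublist (List.sublist_append_right _ _)) hα₂ rfl
    exact ih _ (by omega) ha₁ (hA₁.sublist (List.sublist_append_left _ _)) hw ha₂
      (hA₂.sublist (List.sublist_append_left _ _)) hw rfl
  push Not at hshared
  exfalso
  by_cases hsq : sp = sq
  · subst hsq
    exact false_of_cofinal_runs hwf hx hy hxy h₁ hnd₁ hne₁ hA₁ h₂ hnd₂ hne₂ hA₂ hα₁
      fun z hz₁ hz₂ => or_iff_not_imp_left.2 fun hzs => (hshared z hz₁ hz₂ hzs).1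
  · refine false_of_disjoint_runs hwf hx hy hxy h₁ hnd₁ hne₁ hA₁ hα₁ h₂ hnd₂ hne₂ hA₂ hα₂
      fun z hz₁ hz₂ => ?_
    by_contra hzs
    obtain ⟨rfl, rfl⟩ := hshared z hz₁ hz₂ hzs
    exact hsq rfl

end Core

section Intermediate

variable {Q P M : Type} [DecidableEq P] {A : LTS Q (Interaction P M)} {x : P}

theorem exists_avoids_of_reflTransGen (hnoeps : ∀ q q', ¬ A.Trans q none q') {s e : Q}
    (h : Relation.ReflTransGen (EpsStep (intermediate A x)) s e) :
    ∃ π, Steps A s π e ∧ Avoids x π := by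
  induction h using Relation.ReflTransGen.head_induction_on with
  | refl => exact ⟨[], .nil e, by simp [Avoids]⟩
  | head hstep _ ih =>
    obtain ⟨π, hπ, hA⟩ := ih
    obtain ⟨_ | β, ht, hβ⟩ := hstep
    · exact absurd ht (hnoeps _ _)
    · exact ⟨_, .cons ht hπ,
        List.forall_mem_cons.2 ⟨⟨β, rfl, projLabel_eq_none_iff.1 hβ.symm⟩, hA⟩⟩

theorem trans_of_intermediate_trans {u u' : Q} {a : Act P M} {α : Interaction P M}
    (h : (intermediate A x).Trans u (some a) u') (ha : projLabel x α = some a) :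
    A.Trans u (some α) u' := by
  obtain ⟨_ | β, ht, hβ⟩ := h
  · cases hβ
  · exact eq_of_projLabel_eq_some hβ.symm ha ▸ ht

end Intermediate

theorem intermediate_send_recv_interaction_general
    {P M Q : Type} [DecidableEq P] [Finite P] [Finite M] [Finite Q]
    (A : LTS Q (Interaction P M)) (hwf : WellFormed A)
    (p q : P) (hpq : p ≠ q) (m : M)
    (s sp sp' sq sq' : Q)
    (h1 : Relation.ReflTransGen (EpsStep (intermediate A p)) s sp)
    (h2 : (intermediate A p).Trans sp (some (Act.send p q m)) sp')
    (h3 : Relation.ReflTransGen (EpsStep (intermediate A q)) s sq)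
    (h4 : (intermediate A q).Trans sq (some (Act.recv p q m)) sq') :
    ∃ s', A.Trans s (some ⟨p, q, hpq, m⟩) s' := by
  obtain ⟨π₁, hπ₁, hA₁⟩ := exists_avoids_of_reflTransGen hwf.2.1.1 h1
  obtain ⟨π₂, hπ₂, hA₂⟩ := exists_avoids_of_reflTransGen hwf.2.1.1 h3
  exact exists_trans_of_avoiding_runs hwf (by simp) (by simp) hpq
    hπ₁ hA₁ (trans_of_intermediate_trans h2 (by simp [projLabel]))
    hπ₂ hA₂ (trans_of_intermediate_trans h4 (by simp [projLabel, hpq]))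

/-- Lemma 3.7: if, from a state `s` of a well-formed c-automaton `A`,
the intermediate CFSM `A_p` can reach (via ε-steps) a send `pq!m` and the intermediate
CFSM `A_q` can reach (via ε-steps) the matching receive `pq?m`, then `s` has an outgoing
transition labelled `p→q:m` in `A`. -/
theorem intermediate_send_recv_interaction
    {P M Q : Type} [DecidableEq P] [Finite P] [Finite M] [Finite Q]
    (A : LTS Q (Interaction P M)) (hwf : WellFormed A)
    (p q : P) (hpq : p ≠ q) (hp : p ∈ ptps A) (hq : q ∈ ptps A) (m : M)
    (s sp sp' sq sq' : Q)
    (h1 : Relation.ReflTransGen (EpsStep (intermediate A p)) s sp)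
    (h2 : (intermediate A p).Trans sp (some (Act.send p q m)) sp')
    (h3 : Relation.ReflTransGen (EpsStep (intermediate A q)) s sq)
    (h4 : (intermediate A q).Trans sq (some (Act.recv p q m)) sq') :
    ∃ s', A.Trans s (some ⟨p, q, hpq, m⟩) s' :=
  intermediate_send_recv_interaction_general A hwf p q hpq m s sp sp' sq sq' h1 h2 h3 h4

end CAut
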